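/- arXiv:2508.06611 — 4 statements merged into one kernel-verified Lean document; each statement's English description precedes it below -/
import Mathlib

section
/- Let h be a real symmetric N×N matrix with simple eigenvalues φ₁ < … < φ_N and corresponding orthonormal eigenvectors |φₙ⟩. Let p(z) = det(zI − h) be its characteristic polynomial and q(z) = det(zI − h̃) the characteristic polynomial of the principal submatrix h̃ obtained by deleting the last row and column. Then the squared weight of each eigenvector on the last coordinate satisfies ⟨N|φₙ⟩² = q(φₙ)/p'(φₙ). -/
/-!
Diagonalize `h = U D Uᵀ` with `U` the orthogonal matrix of eigenvectors. Conjugation commutes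
with taking adjugates, so `adj(φᵢ - h) = U adj(φᵢ - D) Uᵀ`. The matrix `adj(φᵢ - D)` is diagonal
with `k`-th entry `∏_{j ≠ k} (φᵢ - φⱼ)`, which vanishes for `k ≠ i` and equals `p'(φᵢ)` for
`k = i`; hence `adj(φᵢ - h) = p'(φᵢ) |φᵢ⟩⟨φᵢ|`. Its `(N, N)` entry is the cofactor
`det(φᵢ - h̃) = q(φᵢ)`, and `p'(φᵢ) ≠ 0` because the eigenvalues are simple.
-/

open Matrix Polynomial Finset

namespace Matrix

variable {n R : Type*} [Fintype n] [DecidableEq n] [CommRing R]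

theorem adjugate_mul_mul_of_mul_eq_one {U V : Matrix n n R} (hVU : V * U = 1) (A : Matrix n n R) :
    adjugate (U * A * V) = U * adjugate A * V := by
  have hUV : U * V = 1 := mul_eq_one_comm.mp hVU
  have hdet : U.det * V.det = 1 := by rw [← det_mul, hUV, det_one]
  have hadjV : adjugate V = V.det • U := by
    rw [← Matrix.mul_one (adjugate V), ← hVU, ← Matrix.mul_assoc, adjugate_mul, smul_mul,
      Matrix.one_mul]
  have hadjU : adjugate U = U.det • V := by
    rw [← Matrix.mul_one (adjugate U), ← hUV, ← Matrix.mul_assoc, adjugate_mul, smul_mul,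
      Matrix.one_mul]
  rw [adjugate_mul_distrib, adjugate_mul_distrib, hadjV, hadjU]
  simp only [Matrix.smul_mul, Matrix.mul_smul, smul_smul, hdet, one_smul, Matrix.mul_assoc]

theorem adjugate_scalar_sub_apply_last {m : ℕ} (M : Matrix (Fin (m + 1)) (Fin (m + 1)) R)
    (t : R) :
    adjugate (scalar _ t - M) (Fin.last m) (Fin.last m) =
      (M.submatrix Fin.castSucc Fin.castSucc).charpoly.eval t := by
  rw [adjugate_fin_succ_eq_det_submatrix, Fin.succAbove_last, eval_charpoly,
    ← two_mul, pow_mul, neg_one_sq, one_pow, one_mul]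
  congr 1
  ext a b
  simp [diagonal_apply, Fin.castSucc_inj]

namespace IsHermitian

variable {𝕜 : Type*} [RCLike 𝕜] {A : Matrix n n 𝕜} (hA : A.IsHermitian)
include hA

theorem eval_derivative_charpoly_eigenvalue (i : n) :
    (derivative A.charpoly).eval (hA.eigenvalues i : 𝕜) =
      ∏ j ∈ univ.erase i, ((hA.eigenvalues i : 𝕜) - hA.eigenvalues j) := by
  rw [hA.charpoly_eq, derivative_prod_finset, eval_finsetSum, sum_eq_single i]
  · simp [eval_prod]
  · intro k _ hki
    rw [derivative_X_sub_C, mul_one, eval_prod]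
    exact prod_eq_zero (mem_erase.mpr ⟨Ne.symm hki, mem_univ i⟩) (by simp)
  · simp

theorem eval_derivative_charpoly_eigenvalue_ne_zero (hsimple : Function.Injective hA.eigenvalues)
    (i : n) : (derivative A.charpoly).eval (hA.eigenvalues i : 𝕜) ≠ 0 := by
  rw [hA.eval_derivative_charpoly_eigenvalue]
  refine prod_ne_zero_iff.mpr fun j hj ↦ sub_ne_zero.mpr fun e ↦ ?_
  exact (mem_erase.mp hj).1 (hsimple (RCLike.ofReal_injective e)).symm

theorem scalar_sub_eq (t : 𝕜) :
    scalar n t - A = (hA.eigenvectorUnitary : Matrix n n 𝕜) *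
      diagonal (fun k ↦ t - hA.eigenvalues k) * star (hA.eigenvectorUnitary : Matrix n n 𝕜) := by
  have hdiag : diagonal (fun k ↦ t - hA.eigenvalues k) =
      t • (1 : Matrix n n 𝕜) - diagonal (RCLike.ofReal ∘ hA.eigenvalues) := by
    ext a b
    by_cases hab : a = b <;> simp [hab]
  conv_lhs => rw [hA.spectral_theorem]
  rw [hdiag, Unitary.conjStarAlgAut_apply, mul_sub, sub_mul, Matrix.mul_smul, mul_one,
    Matrix.smul_mul, Unitary.mul_star_self_of_mem hA.eigenvectorUnitary.2, scalar_apply,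
    smul_one_eq_diagonal]

theorem adjugate_scalar_sub_eigenvalue (i : n) :
    Matrix.adjugate (scalar n (hA.eigenvalues i : 𝕜) - A) =
      (derivative A.charpoly).eval (hA.eigenvalues i : 𝕜) •
        vecMulVec (hA.eigenvectorBasis i) (star (hA.eigenvectorBasis i)) := by
  rw [hA.scalar_sub_eq,
    adjugate_mul_mul_of_mul_eq_one (Unitary.star_mul_self_of_mem hA.eigenvectorUnitary.2),
    adjugate_diagonal, hA.eval_derivative_charpoly_eigenvalue]
  ext a b
  rw [mul_apply]
  simp only [mul_diagonal, star_apply, eigenvectorUnitary_apply, smul_apply,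
    vecMulVec_apply, Pi.star_apply, smul_eq_mul]
  rw [sum_eq_single i]
  · ring
  · intro k _ hki
    rw [prod_eq_zero (mem_erase.mpr ⟨Ne.symm hki, mem_univ i⟩) (sub_self _)]
    ring
  · simp

end IsHermitian

end Matrix

/-- For a real symmetric `N×N` matrix `h` with simple eigenvalues, with `p` its
characteristic polynomial and `q` that of the principal submatrix obtained by deleting the
last row and column, the squared last component of each unit eigenvector satisfies
`⟨N|φₙ⟩² = q(φₙ)/p'(φₙ)`. -/
theorem stmt10 (n : ℕ) (h : Matrix (Fin (n + 1)) (Fin (n + 1)) ℝ)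
    (hH : h.IsHermitian) (hsimple : Function.Injective hH.eigenvalues)
    (p q : Polynomial ℝ)
    (hp : p = h.charpoly)
    (hq : q = (h.submatrix Fin.castSucc Fin.castSucc).charpoly) :
    ∀ i : Fin (n + 1),
      (hH.eigenvectorBasis i (Fin.last n)) ^ 2 =
        q.eval (hH.eigenvalues i) / (Polynomial.derivative p).eval (hH.eigenvalues i) := by
  intro i
  subst hp hq
  have hne := hH.eval_derivative_charpoly_eigenvalue_ne_zero hsimple i
  have hadj := congrFun₂ (hH.adjugate_scalar_sub_eigenvalue i) (Fin.last n) (Fin.last n)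
  simp only [RCLike.ofReal_real_eq_id, id] at hne hadj
  rw [adjugate_scalar_sub_apply_last, Matrix.smul_apply, vecMulVec_apply, smul_eq_mul,
    star_trivial] at hadj
  rw [hadj, eq_div_iff hne]
  ring
end

section
/- Let h₊ = [[0, γ, 0],[γ, 0, γ],[0, γ, λ]] with 0 < γ < λ. The eigenvalue μ of h₊ nearest to λ satisfies λ ≤ μ ≤ λ + 2γ²/λ, and the corresponding unit eigenvector v satisfies |v₁| ≤ 2γ²/λ² (first component bounded by order γ²), provided γ/λ ≤ 1/4. -/
lemma spec_iff14 (γ lam : ℝ) (h : Matrix (Fin 3) (Fin 3) ℝ)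
    (hh : h = !![0, γ, 0; γ, 0, γ; 0, γ, lam]) (x : ℝ) :
    x ∈ spectrum ℝ h ↔ x^3 - lam*x^2 - 2*γ^2*x + γ^2*lam = 0 := by
  rw [spectrum.mem_iff, Matrix.isUnit_iff_isUnit_det, isUnit_iff_ne_zero, not_ne_iff]
  subst hh
  rw [Matrix.det_fin_three]
  simp [Matrix.algebraMap_matrix_apply]
  constructor <;> intro h' <;> nlinarith [h']

set_option maxHeartbeats 1000000 in
/-- For `h₊ = [[0,γ,0],[γ,0,γ],[0,γ,λ]]` with `0 < γ`, `γ/λ ≤ 1/4`: the largest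
eigenvalue `μ` satisfies `λ ≤ μ ≤ λ + 2γ²/λ`, and a unit eigenvector `v` for `μ` has
first component bounded by `|v₁| ≤ 2γ²/λ²`. -/
theorem stmt14 (γ lam : ℝ) (hγ : 0 < γ) (hlam : 0 < lam) (hsmall : γ / lam ≤ 1 / 4)
    (h : Matrix (Fin 3) (Fin 3) ℝ) (hh : h = !![0, γ, 0; γ, 0, γ; 0, γ, lam])
    (μ : ℝ) (hμ : μ ∈ spectrum ℝ h) (hmax : ∀ μ' ∈ spectrum ℝ h, μ' ≤ μ)
    (v : Fin 3 → ℝ) (hv : h.mulVec v = μ • v) (hunit : ∑ i, v i ^ 2 = 1) :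
    lam ≤ μ ∧ μ ≤ lam + 2 * γ ^ 2 / lam ∧ |v 0| ≤ 2 * γ ^ 2 / lam ^ 2 := by
  have hγlam : 4 * γ ≤ lam := by
    rw [div_le_div_iff₀ hlam (by norm_num)] at hsmall; linarith
  set s : ℝ := 2 * γ ^ 2 / lam with hs
  have hspos : 0 < s := by positivity
  have hslam : s * lam = 2 * γ ^ 2 := by rw [hs]; field_simp
  set f : ℝ → ℝ := fun x => x^3 - lam*x^2 - 2*γ^2*x + γ^2*lam with hf
  have hpμ : f μ = 0 := (spec_iff14 γ lam h hh μ).mp hμ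
  -- f positive for x ≥ lam + s
  have hpos : ∀ x : ℝ, lam + s ≤ x → 0 < f x := by
    intro x hx
    have hxpos : 0 < x := by linarith
    have h1 : s * x ^ 2 ≤ (x - lam) * x ^ 2 := by nlinarith [sq_nonneg x]
    have h2 : 2 * γ ^ 2 * x ^ 2 / lam ≤ (x - lam) * x ^ 2 := by
      rw [div_le_iff₀ hlam]; nlinarith
    have key : 0 < γ ^ 2 / lam * (x ^ 2 + (x - lam) ^ 2) := by positivity
    have : γ ^ 2 / lam * (x ^ 2 + (x - lam) ^ 2) =
        2 * γ ^ 2 * x ^ 2 / lam - (2*γ^2*x - γ^2*lam) := by field_simp; ring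
    simp only [hf]
    nlinarith
  -- upper bound
  have hub : μ ≤ lam + s := by
    by_contra hc
    push_neg at hc
    exact absurd hpμ (ne_of_gt (hpos μ hc.le))
  -- f lam < 0, f (lam+s) > 0 : find root in [lam, lam+s]
  have hflam : f lam < 0 := by
    have hfl : f lam = -(γ ^ 2 * lam) := by simp only [hf]; ring
    have : 0 < γ ^ 2 * lam := by positivity
    rw [hfl]; linarith
  have hcont : ContinuousOn f (Set.Icc lam (lam + s)) := by fun_prop
  have hiv := intermediate_value_Icc (by linarith : lam ≤ lam + s) hcont
  have h0mem : (0:ℝ) ∈ Set.Icc (f lam) (f (lam + s)) :=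
    ⟨hflam.le, (hpos _ le_rfl).le⟩
  obtain ⟨r, hrmem, hr0⟩ := hiv h0mem
  have hrspec : r ∈ spectrum ℝ h := (spec_iff14 γ lam h hh r).mpr hr0
  have hlb : lam ≤ μ := le_trans hrmem.1 (hmax r hrspec)
  refine ⟨hlb, hub, ?_⟩
  -- eigenvector bound
  have hμpos : 0 < μ := lt_of_lt_of_le hlam hlb
  have e0 := congrFun hv 0
  have e1 := congrFun hv 1
  simp [hh, Matrix.mulVec, dotProduct, Fin.sum_univ_three] at e0 e1
  have hsum : v 0 ^ 2 + v 1 ^ 2 + v 2 ^ 2 = 1 := by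
    rw [← hunit, Fin.sum_univ_three]
  have habs0 : |v 0| ≤ 1 := by
    nlinarith [sq_abs (v 0), abs_nonneg (v 0), sq_nonneg (v 1), sq_nonneg (v 2)]
  have habs2 : |v 2| ≤ 1 := by
    nlinarith [sq_abs (v 2), abs_nonneg (v 2), sq_nonneg (v 0), sq_nonneg (v 1)]
  have hb : μ * |v 1| ≤ 2 * γ := by
    have : μ * |v 1| = |γ * v 0 + γ * v 2| := by
      rw [← abs_of_pos hμpos, ← abs_mul]
      congr 1; linarith [e1]
    rw [this]
    calc |γ * v 0 + γ * v 2| ≤ |γ * v 0| + |γ * v 2| := abs_add_le _ _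
      _ = γ * |v 0| + γ * |v 2| := by rw [abs_mul, abs_mul, abs_of_pos hγ]
      _ ≤ 2 * γ := by nlinarith
  have ha : μ * |v 0| = γ * |v 1| := by
    rw [← abs_of_pos hμpos, ← abs_mul, ← abs_of_pos hγ, ← abs_mul]
    congr 1; linarith [e0]
  have hμ2 : μ ^ 2 * |v 0| ≤ 2 * γ ^ 2 := by nlinarith [abs_nonneg (v 1), abs_nonneg (v 0)]
  rw [le_div_iff₀ (by positivity : (0:ℝ) < lam ^ 2)]
  have hμ2lam : lam ^ 2 ≤ μ ^ 2 := by nlinarith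
  calc |v 0| * lam ^ 2 = lam ^ 2 * |v 0| := by ring
    _ ≤ μ ^ 2 * |v 0| := mul_le_mul_of_nonneg_right hμ2lam (abs_nonneg _)
    _ ≤ 2 * γ ^ 2 := hμ2
end

section
/- Let H be the block Hermitian matrix [[0, γI, 0, 0],[γI, 0, A, 0],[0, A†, 0, γI],[0, 0, γI, 0]] built from an m×n matrix A with singular values λₙ, and |b⟩ ∈ ℂᵐ a unit vector. Then (⟨4| ⊗ I) e^{−iHt} (|1⟩ ⊗ |b⟩) = Σₙ αₙ ⟨ηₙ|b⟩ |λₙ⟩, where αₙ = (1/2)(⟨+|e^{−i hₙ₊ t}|+⟩ − ⟨+|e^{−i hₙ₋ t}|+⟩) with hₙ± = [[0, γ],[γ, ±λₙ]] and |+⟩ the first basis vector of ℂ². (Here {|ηₙ⟩} and {|λₙ⟩} are the left and right singular vector orthonormal bases of A.) -/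
/-!
For a singular triple `A λ = σ η`, `Aᴴ η = σ λ`, the vectors `u₁ = (η,0,0,0)`, `u₂ = (0,η,0,0)`,
`u₃ = (0,0,λ,0)`, `u₄ = (0,0,0,λ)` span an `H`-invariant subspace on which `H` acts as a path
`u₁ — u₂ — u₃ — u₄` with couplings `γ, σ, γ`. This chain is reflection symmetric, so it splits into
the symmetric pair `u₁ + u₄, u₂ + u₃` and the antisymmetric pair `u₁ - u₄, u₂ - u₃`, on which `H`
acts by `h₊` and `h₋` respectively. Hence the last block of `e^{-iHt} u₁` is
`½ (⟨+|e^{-ih₊t}|+⟩ - ⟨+|e^{-ih₋t}|+⟩) λ`, and expanding `b` in the orthonormal basis `η` gives the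
theorem.
-/

namespace Matrix

variable {𝕂 N K : Type*} [RCLike 𝕂] [Fintype N] [DecidableEq N] [Fintype K] [DecidableEq K]

theorem pow_mul_eq_mul_pow_of_mul_eq {R : Type*} [Semiring R] {M : Matrix N N R}
    {h : Matrix K K R} {P : Matrix N K R} (hMP : M * P = P * h) (m : ℕ) :
    M ^ m * P = P * h ^ m := by
  induction m with
  | zero => simp
  | succ m ih => rw [pow_succ, pow_succ, Matrix.mul_assoc, hMP, ← Matrix.mul_assoc, ih,
      Matrix.mul_assoc]

attribute [local instance] Matrix.linftyOpNormedRing Matrix.linftyOpNormedAlgebra in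
theorem exp_mul_eq_mul_exp_of_mul_eq {M : Matrix N N 𝕂} {h : Matrix K K 𝕂}
    {P : Matrix N K 𝕂} (hMP : M * P = P * h) :
    NormedSpace.exp M * P = P * NormedSpace.exp h := by
  have hM := (NormedSpace.exp_series_hasSum_exp' (𝕂 := 𝕂) M).map (addMonoidHomMulRight P)
    (continuous_id.matrix_mul continuous_const)
  have hh := (NormedSpace.exp_series_hasSum_exp' (𝕂 := 𝕂) h).map (addMonoidHomMulLeft P)
    (continuous_const.matrix_mul continuous_id)
  refine hM.unique (hh.congr_fun fun m => ?_)
  simp only [Function.comp_apply, addMonoidHomMulRight_apply, addMonoidHomMulLeft_apply,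
    smul_mul, Matrix.mul_smul, pow_mul_eq_mul_pow_of_mul_eq hMP]

theorem exp_mulVec_of_mulVec_eq_pair {M : Matrix N N 𝕂} {h : Matrix (Fin 2) (Fin 2) 𝕂}
    {v₀ v₁ : N → 𝕂} (h₀ : M *ᵥ v₀ = h 0 0 • v₀ + h 1 0 • v₁)
    (h₁ : M *ᵥ v₁ = h 0 1 • v₀ + h 1 1 • v₁) :
    NormedSpace.exp M *ᵥ v₀ = NormedSpace.exp h 0 0 • v₀ + NormedSpace.exp h 1 0 • v₁ := by
  set P : Matrix N (Fin 2) 𝕂 := (of ![v₀, v₁])ᵀ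
  have hcol : ∀ c : Fin 2 → 𝕂, P *ᵥ c = c 0 • v₀ + c 1 • v₁ := by
    intro c
    ext x
    simp [P, mulVec, dotProduct, Fin.sum_univ_two, mul_comm]
  have hMP : M * P = P * h := by
    refine ext_of_mulVec_single fun i => ?_
    rw [← mulVec_mulVec, ← mulVec_mulVec, hcol, hcol]
    fin_cases i <;> simp [h₀, h₁]
  have := congrArg (· *ᵥ Pi.single 0 1) (exp_mul_eq_mul_exp_of_mul_eq hMP)
  simp only [← mulVec_mulVec, hcol] at this
  simpa [mulVec_single_one] using this

theorem exp_smul_mulVec_of_chain {M : Matrix N N 𝕂} {g s : 𝕂} {u₁ u₂ u₃ u₄ : N → 𝕂}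
    (h₁ : M *ᵥ u₁ = g • u₂) (h₂ : M *ᵥ u₂ = g • u₁ + s • u₃)
    (h₃ : M *ᵥ u₃ = s • u₂ + g • u₄) (h₄ : M *ᵥ u₄ = g • u₃) (τ : 𝕂) :
    NormedSpace.exp (τ • M) *ᵥ u₁ =
      (2⁻¹ : 𝕂) • (NormedSpace.exp (τ • !![0, g; g, s]) 0 0 • (u₁ + u₄)
        + NormedSpace.exp (τ • !![0, g; g, s]) 1 0 • (u₂ + u₃)
        + NormedSpace.exp (τ • !![0, g; g, -s]) 0 0 • (u₁ - u₄)
        + NormedSpace.exp (τ • !![0, g; g, -s]) 1 0 • (u₂ - u₃)) := by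
  have hsym := exp_mulVec_of_mulVec_eq_pair (M := τ • M) (h := τ • !![0, g; g, s])
    (v₀ := u₁ + u₄) (v₁ := u₂ + u₃) ?_ ?_
  have hanti := exp_mulVec_of_mulVec_eq_pair (M := τ • M) (h := τ • !![0, g; g, -s])
    (v₀ := u₁ - u₄) (v₁ := u₂ - u₃) ?_ ?_
  · have hu : u₁ = (2⁻¹ : 𝕂) • ((u₁ + u₄) + (u₁ - u₄)) := by module
    conv_lhs => rw [hu, mulVec_smul, mulVec_add, hsym, hanti]
    module
  all_goals
    simp only [smul_mulVec, mulVec_add, mulVec_sub, h₁, h₂, h₃, h₄, smul_apply, of_apply,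
      cons_val', cons_val_zero, cons_val_one, cons_val_fin_one, smul_eq_mul]
    module

end Matrix

open Matrix

section
variable {ι R : Type*} [Fintype ι] [DecidableEq ι] [CommRing R] [StarRing R]

theorem sum_star_dotProduct_smul_eq_of_orthonormal {e : ι → ι → R}
    (he : ∀ k l, star (e k) ⬝ᵥ e l = if k = l then 1 else 0) (b : ι → R) :
    ∑ k, (star (e k) ⬝ᵥ b) • e k = b := by
  set U : Matrix ι ι R := of e
  have hU : U * Uᴴ = 1 := by
    ext k l
    simpa [U, mul_apply, one_apply, dotProduct, mul_comm, eq_comm] using he l k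
  have hsum : ∑ k, (star (e k) ⬝ᵥ b) • e k = (Uᴴ * U)ᵀ *ᵥ b := by
    ext x
    simp only [Finset.sum_apply, Pi.smul_apply, smul_eq_mul, mulVec, dotProduct, transpose_apply,
      mul_apply, conjTranspose_apply, Finset.sum_mul, U, of_apply, Pi.star_apply]
    rw [Finset.sum_comm]
    exact Finset.sum_congr rfl fun i _ => Finset.sum_congr rfl fun k _ => by ring
  rw [hsum, mul_eq_one_comm.mp hU, transpose_one, one_mulVec]
end

section
variable {m n R : Type*} [Fintype m] [Fintype n] [DecidableEq m] [DecidableEq n]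
  [CommSemiring R] [Star R]

def blockHamiltonian (γ : R) (A : Matrix m n R) :
    Matrix ((m ⊕ m) ⊕ (n ⊕ n)) ((m ⊕ m) ⊕ (n ⊕ n)) R :=
  fromBlocks (fromBlocks 0 (γ • 1) (γ • 1) 0) (fromBlocks 0 0 A 0)
    (fromBlocks 0 Aᴴ 0 0) (fromBlocks 0 (γ • 1) (γ • 1) 0)

theorem blockHamiltonian_mulVec (γ : R) (A : Matrix m n R) (x₁ x₂ : m → R) (x₃ x₄ : n → R) :
    blockHamiltonian γ A *ᵥ Sum.elim (Sum.elim x₁ x₂) (Sum.elim x₃ x₄) =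
      Sum.elim (Sum.elim (γ • x₂) (γ • x₁ + A *ᵥ x₃)) (Sum.elim (Aᴴ *ᵥ x₂ + γ • x₄) (γ • x₃)) := by
  ext ((i | i) | (i | i)) <;>
    simp [blockHamiltonian, fromBlocks_mulVec, smul_mulVec]

theorem exp_smul_blockHamiltonian_mulVec_inr_inr {𝕂 : Type*} [RCLike 𝕂] {A : Matrix m n 𝕂}
    {g s : 𝕂} {x : m → 𝕂} {y : n → 𝕂} (hy : A *ᵥ y = s • x) (hx : Aᴴ *ᵥ x = s • y) (τ : 𝕂)
    (j : n) :
    (NormedSpace.exp (τ • blockHamiltonian g A) *ᵥ Sum.elim (Sum.elim x 0) 0) (.inr (.inr j)) =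
      2⁻¹ * (NormedSpace.exp (τ • !![0, g; g, s]) 0 0
        - NormedSpace.exp (τ • !![0, g; g, -s]) 0 0) * y j := by
  have hchain := exp_smul_mulVec_of_chain (M := blockHamiltonian g A) (g := g) (s := s)
    (u₁ := Sum.elim (Sum.elim x 0) (Sum.elim 0 0)) (u₂ := Sum.elim (Sum.elim 0 x) (Sum.elim 0 0))
    (u₃ := Sum.elim (Sum.elim 0 0) (Sum.elim y 0)) (u₄ := Sum.elim (Sum.elim 0 0) (Sum.elim 0 y))
    ?_ ?_ ?_ ?_ τ
  · rw [← Sum.elim_zero_zero, hchain]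
    simp only [Pi.smul_apply, Pi.add_apply, Pi.sub_apply, Sum.elim_inr, Pi.zero_apply, smul_eq_mul]
    ring
  all_goals
    rw [blockHamiltonian_mulVec]
    ext ((i | i) | (i | i)) <;> simp [hx, hy]

end

theorem stmt16_general (n : ℕ) (γ t : ℝ)
    (A : Matrix (Fin n) (Fin n) ℂ)
    (σ : Fin n → ℝ)
    (η lv : Fin n → Fin n → ℂ)
    (hηON : ∀ k l, star (η k) ⬝ᵥ η l = if k = l then 1 else 0)
    (hsv1 : ∀ k, A.mulVec (lv k) = (σ k : ℂ) • η k)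
    (hsv2 : ∀ k, Aᴴ.mulVec (η k) = (σ k : ℂ) • lv k)
    (b : Fin n → ℂ)
    (H : Matrix ((Fin n ⊕ Fin n) ⊕ (Fin n ⊕ Fin n)) ((Fin n ⊕ Fin n) ⊕ (Fin n ⊕ Fin n)) ℂ)
    (hH : H = Matrix.fromBlocks
        (Matrix.fromBlocks 0 ((γ : ℂ) • 1) ((γ : ℂ) • 1) 0)
        (Matrix.fromBlocks 0 0 A 0)
        (Matrix.fromBlocks 0 Aᴴ 0 0)
        (Matrix.fromBlocks 0 ((γ : ℂ) • 1) ((γ : ℂ) • 1) 0))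
    (vin : (Fin n ⊕ Fin n) ⊕ (Fin n ⊕ Fin n) → ℂ)
    (hvin : vin = Sum.elim (Sum.elim b (0 : Fin n → ℂ)) (0 : Fin n ⊕ Fin n → ℂ))
    (α : Fin n → ℂ)
    (hα : ∀ k, α k = (1 / 2) *
        ((NormedSpace.exp ((-(Complex.I * t)) • !![0, (γ : ℂ); (γ : ℂ), (σ k : ℂ)])) 0 0
          - (NormedSpace.exp ((-(Complex.I * t)) • !![0, (γ : ℂ); (γ : ℂ), (-σ k : ℂ)])) 0 0)) :
    ∀ j : Fin n,
      (NormedSpace.exp ((-(Complex.I * t)) • H)).mulVec vin (Sum.inr (Sum.inr j)) =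
        ∑ k, α k * (star (η k) ⬝ᵥ b) * lv k j := by
  intro j
  have hH' : H = blockHamiltonian (γ : ℂ) A := hH
  have hvin' : vin = ∑ k, (star (η k) ⬝ᵥ b) • Sum.elim (Sum.elim (η k) 0) 0 := by
    conv_lhs => rw [hvin, ← sum_star_dotProduct_smul_eq_of_orthonormal hηON b]
    ext ((i | i) | (i | i)) <;> simp
  rw [hH', hvin', mulVec_sum, Finset.sum_apply]
  refine Finset.sum_congr rfl fun k _ => ?_
  rw [mulVec_smul, Pi.smul_apply, exp_smul_blockHamiltonian_mulVec_inr_inr (hsv1 k) (hsv2 k), hα,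
    smul_eq_mul]
  ring

/-- For the block Hamiltonian `H` built from a square matrix `A` with singular value
decomposition `A|λₖ⟩ = σₖ|ηₖ⟩` (all `σₖ > 0`), and a unit vector `|b⟩`, one has
`(⟨4|⊗I)e^{−iHt}(|1⟩⊗|b⟩) = Σₖ αₖ ⟨ηₖ|b⟩ |λₖ⟩`, where
`αₖ = (1/2)(⟨+|e^{−i hₖ₊ t}|+⟩ − ⟨+|e^{−i hₖ₋ t}|+⟩)` with `hₖ± = [[0,γ],[γ,±σₖ]]`. -/
theorem stmt16 (n : ℕ) (γ t : ℝ) (hγ : 0 < γ)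
    (A : Matrix (Fin n) (Fin n) ℂ)
    (σ : Fin n → ℝ) (hσ : ∀ k, 0 < σ k)
    (η lv : Fin n → Fin n → ℂ)
    (hηON : ∀ k l, star (η k) ⬝ᵥ η l = if k = l then 1 else 0)
    (hlvON : ∀ k l, star (lv k) ⬝ᵥ lv l = if k = l then 1 else 0)
    (hsv1 : ∀ k, A.mulVec (lv k) = (σ k : ℂ) • η k)
    (hsv2 : ∀ k, Aᴴ.mulVec (η k) = (σ k : ℂ) • lv k)
    (b : Fin n → ℂ) (hb : star b ⬝ᵥ b = 1)
    (H : Matrix ((Fin n ⊕ Fin n) ⊕ (Fin n ⊕ Fin n)) ((Fin n ⊕ Fin n) ⊕ (Fin n ⊕ Fin n)) ℂ)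
    (hH : H = Matrix.fromBlocks
        (Matrix.fromBlocks 0 ((γ : ℂ) • 1) ((γ : ℂ) • 1) 0)
        (Matrix.fromBlocks 0 0 A 0)
        (Matrix.fromBlocks 0 Aᴴ 0 0)
        (Matrix.fromBlocks 0 ((γ : ℂ) • 1) ((γ : ℂ) • 1) 0))
    (vin : (Fin n ⊕ Fin n) ⊕ (Fin n ⊕ Fin n) → ℂ)
    (hvin : vin = Sum.elim (Sum.elim b (0 : Fin n → ℂ)) (0 : Fin n ⊕ Fin n → ℂ))
    (α : Fin n → ℂ)
    (hα : ∀ k, α k = (1 / 2) *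
        ((NormedSpace.exp ((-(Complex.I * t)) • !![0, (γ : ℂ); (γ : ℂ), (σ k : ℂ)])) 0 0
          - (NormedSpace.exp ((-(Complex.I * t)) • !![0, (γ : ℂ); (γ : ℂ), (-σ k : ℂ)])) 0 0)) :
    ∀ j : Fin n,
      (NormedSpace.exp ((-(Complex.I * t)) • H)).mulVec vin (Sum.inr (Sum.inr j)) =
        ∑ k, α k * (star (η k) ⬝ᵥ b) * lv k j :=
  stmt16_general n γ t A σ η lv hηON hsv1 hsv2 b H hH vin hvin α hα
end

section
/- Let h₊ be the (R+1)×(R+1) symmetric tridiagonal matrix with zero diagonal except (h₊)_{R+1,R+1} = 1/x, x > 0, and off-diagonals J₁,…,J_R > 0. Then all eigenvalues of h₊ are simple, and exactly one eigenvalue exceeds ‖h̃‖ + J_R when 1/x > 2(‖h̃‖ + J_R), where h̃ is the top-left R×R submatrix (i.e., exactly one 'high-energy' eigenvalue exists, the rest lying in [−‖h̃‖ − J_R, ‖h̃‖ + J_R]). -/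
open scoped Matrix.Norms.L2Operator

/-- The real symmetric tridiagonal matrix with diagonal `d` and off-diagonal couplings
`J n` between coordinates `n` and `n+1` (0-indexed). -/
def triMat (N : ℕ) (J d : ℕ → ℝ) : Matrix (Fin N) (Fin N) ℝ :=
  Matrix.of fun i j =>
    if (i : ℕ) + 1 = (j : ℕ) then J i
    else if (j : ℕ) + 1 = (i : ℕ) then J j
    else if i = j then d i else 0

/-- The matrix `h₊(x)`: tridiagonal with couplings `J₁,…,J_R`, zero diagonal except for the
entry `1/x` in position `(R+1,R+1)`. -/
noncomputable def hPlus (R : ℕ) (J : ℕ → ℝ) (x : ℝ) : Matrix (Fin (R + 1)) (Fin (R + 1)) ℝ :=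
  triMat (R + 1) J (fun n => if n = R then 1 / x else 0)

/-! Write `c = ‖h̃‖ + J_R`. Since the couplings are nonzero, the eigenvalue equation can be solved
row by row upwards from the last coordinate, so an eigenvector vanishing there is zero. For two
eigenvectors `u, w` of the orthonormal eigenbasis, `w_last • u - u_last • w` vanishes at the last
coordinate and has squared norm `u_last² + w_last² > 0`. If the two eigenvalues coincided it would
be a nonzero eigenvector, so the spectrum is simple. On vectors vanishing at the last coordinate the
quadratic form of `h₊` is that of `h̃`, hence at most `c`, while on this combination it is
`λ_u w_last² + λ_w u_last²`; so at most one eigenvalue exceeds `c`. One does, because the last basis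
vector has Rayleigh quotient `1/x > c`. Finally the form is at least `-c`, since the cross term
`2 J_R v_R v_last` is at least `-J_R (v_R² + v_last²)` and the diagonal term `v_last² / x` is
nonnegative. -/

namespace Matrix

theorem abs_dotProduct_mulVec_le {n : Type*} [Fintype n] [DecidableEq n] (A : Matrix n n ℝ)
    (w : n → ℝ) : |w ⬝ᵥ (A *ᵥ w)| ≤ ‖A‖ * (w ⬝ᵥ w) := by
  have hnorm : w ⬝ᵥ w = ‖WithLp.toLp 2 w‖ ^ 2 := by
    rw [← real_inner_self_eq_norm_sq, EuclideanSpace.inner_toLp_toLp, star_trivial]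
  calc |w ⬝ᵥ (A *ᵥ w)| = |inner ℝ (WithLp.toLp 2 w) (WithLp.toLp 2 (A *ᵥ w))| := by
        rw [EuclideanSpace.inner_toLp_toLp, star_trivial, dotProduct_comm]
    _ ≤ ‖WithLp.toLp 2 w‖ * (‖A‖ * ‖WithLp.toLp 2 w‖) :=
        (abs_real_inner_le_norm _ _).trans (by gcongr; exact A.l2_opNorm_mulVec _)
    _ = ‖A‖ * (w ⬝ᵥ w) := by rw [hnorm]; ring

theorem dotProduct_self_eq_init {R : Type*} [Semiring R] {n : ℕ} (v : Fin (n + 1) → R) :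
    v ⬝ᵥ v = Fin.init v ⬝ᵥ Fin.init v + v (Fin.last n) ^ 2 := by
  rw [dotProduct, dotProduct, Fin.sum_univ_castSucc, sq]
  rfl

namespace IsHermitian

variable {n : Type*} [Fintype n] {A : Matrix n n ℝ}

theorem dotProduct_mulVec_comm (hA : A.IsHermitian) (v w : n → ℝ) :
    v ⬝ᵥ (A *ᵥ w) = (A *ᵥ v) ⬝ᵥ w := by
  have hT : Aᵀ = A := by rw [← conjTranspose_eq_transpose_of_trivial, hA]
  rw [dotProduct_mulVec, ← mulVec_transpose, hT]

variable [DecidableEq n]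

theorem dotProduct_eigenvectorBasis (hA : A.IsHermitian) (i j : n) :
    ⇑(hA.eigenvectorBasis i) ⬝ᵥ ⇑(hA.eigenvectorBasis j) = if i = j then 1 else 0 := by
  rw [← orthonormal_iff_ite.mp hA.eigenvectorBasis.orthonormal i j,
    EuclideanSpace.inner_eq_star_dotProduct, star_trivial, dotProduct_comm]

theorem sum_sq_dotProduct_eigenvectorBasis (hA : A.IsHermitian) (v : n → ℝ) :
    ∑ i, (⇑(hA.eigenvectorBasis i) ⬝ᵥ v) ^ 2 = v ⬝ᵥ v := by
  have := hA.eigenvectorBasis.sum_inner_mul_inner (WithLp.toLp 2 v) (WithLp.toLp 2 v)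
  simp only [EuclideanSpace.inner_eq_star_dotProduct, star_trivial] at this
  rw [← this]
  refine Finset.sum_congr rfl fun i _ => ?_
  rw [sq, dotProduct_comm]

theorem dotProduct_mulVec_eq_sum (hA : A.IsHermitian) (v : n → ℝ) :
    v ⬝ᵥ (A *ᵥ v) = ∑ i, hA.eigenvalues i * (⇑(hA.eigenvectorBasis i) ⬝ᵥ v) ^ 2 := by
  have := hA.eigenvectorBasis.sum_inner_mul_inner (WithLp.toLp 2 v) (WithLp.toLp 2 (A *ᵥ v))
  simp only [EuclideanSpace.inner_eq_star_dotProduct, star_trivial] at this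
  rw [dotProduct_comm, ← this]
  refine Finset.sum_congr rfl fun i _ => ?_
  rw [← hA.dotProduct_mulVec_comm, hA.mulVec_eigenvectorBasis, dotProduct_comm v, smul_dotProduct,
    smul_eq_mul]
  ring

theorem eigenvectorBasis_dotProduct_mulVec_self (hA : A.IsHermitian) (i : n) :
    ⇑(hA.eigenvectorBasis i) ⬝ᵥ (A *ᵥ ⇑(hA.eigenvectorBasis i)) = hA.eigenvalues i := by
  rw [hA.mulVec_eigenvectorBasis, dotProduct_smul, hA.dotProduct_eigenvectorBasis, if_pos rfl,
    smul_eq_mul, mul_one]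

theorem le_eigenvalues_of_forall_mul_dotProduct_le (hA : A.IsHermitian) {m : ℝ}
    (h : ∀ v, m * (v ⬝ᵥ v) ≤ v ⬝ᵥ (A *ᵥ v)) (i : n) : m ≤ hA.eigenvalues i := by
  simpa [hA.dotProduct_eigenvectorBasis, hA.eigenvectorBasis_dotProduct_mulVec_self] using
    h (hA.eigenvectorBasis i)

theorem exists_lt_eigenvalues_of_mul_dotProduct_lt (hA : A.IsHermitian) {c : ℝ} (v : n → ℝ)
    (h : c * (v ⬝ᵥ v) < v ⬝ᵥ (A *ᵥ v)) : ∃ i, c < hA.eigenvalues i := by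
  by_contra! hle
  refine h.not_ge ?_
  rw [hA.dotProduct_mulVec_eq_sum, ← hA.sum_sq_dotProduct_eigenvectorBasis, Finset.mul_sum]
  exact Finset.sum_le_sum fun i _ => by gcongr; exact hle i

theorem eigenvectorBasis_apply_ne_zero (hA : A.IsHermitian) {k : n}
    (hk : ∀ (μ : ℝ) (v : n → ℝ), A *ᵥ v = μ • v → v k = 0 → v = 0) (i : n) :
    hA.eigenvectorBasis i k ≠ 0 := by
  intro h0
  have h1 := hA.dotProduct_eigenvectorBasis i i
  rw [hk _ _ (hA.mulVec_eigenvectorBasis i) h0, if_pos rfl, zero_dotProduct] at h1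
  exact zero_ne_one h1

noncomputable def eigenvectorPair (hA : A.IsHermitian) (k i j : n) : n → ℝ :=
  hA.eigenvectorBasis j k • ⇑(hA.eigenvectorBasis i) -
    hA.eigenvectorBasis i k • ⇑(hA.eigenvectorBasis j)

theorem eigenvectorPair_apply_self (hA : A.IsHermitian) (k i j : n) :
    hA.eigenvectorPair k i j k = 0 := by
  simp only [eigenvectorPair, Pi.sub_apply, Pi.smul_apply, smul_eq_mul]
  ring

theorem mulVec_eigenvectorPair (hA : A.IsHermitian) (k : n) {i j : n}
    (hij : hA.eigenvalues i = hA.eigenvalues j) :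
    A *ᵥ hA.eigenvectorPair k i j = hA.eigenvalues i • hA.eigenvectorPair k i j := by
  rw [eigenvectorPair, mulVec_sub, mulVec_smul, mulVec_smul, hA.mulVec_eigenvectorBasis,
    hA.mulVec_eigenvectorBasis, ← hij, smul_sub, smul_comm _ (hA.eigenvalues i),
    smul_comm _ (hA.eigenvalues i)]

theorem eigenvectorPair_dotProduct_self (hA : A.IsHermitian) (k : n) {i j : n} (hij : i ≠ j) :
    hA.eigenvectorPair k i j ⬝ᵥ hA.eigenvectorPair k i j =
      hA.eigenvectorBasis j k ^ 2 + hA.eigenvectorBasis i k ^ 2 := by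
  simp only [eigenvectorPair, sub_dotProduct, dotProduct_sub, smul_dotProduct, dotProduct_smul,
    hA.dotProduct_eigenvectorBasis, if_neg hij, if_neg hij.symm, if_pos, smul_eq_mul]
  ring

theorem eigenvectorPair_dotProduct_mulVec (hA : A.IsHermitian) (k : n) {i j : n} (hij : i ≠ j) :
    hA.eigenvectorPair k i j ⬝ᵥ (A *ᵥ hA.eigenvectorPair k i j) =
      hA.eigenvalues i * hA.eigenvectorBasis j k ^ 2 +
        hA.eigenvalues j * hA.eigenvectorBasis i k ^ 2 := by
  simp only [eigenvectorPair, mulVec_sub, mulVec_smul, hA.mulVec_eigenvectorBasis,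
    sub_dotProduct, dotProduct_sub, smul_dotProduct, dotProduct_smul,
    hA.dotProduct_eigenvectorBasis, if_neg hij, if_neg hij.symm, if_pos, smul_eq_mul]
  ring

theorem eigenvalues_injective (hA : A.IsHermitian) {k : n}
    (hk : ∀ (μ : ℝ) (v : n → ℝ), A *ᵥ v = μ • v → v k = 0 → v = 0) :
    Function.Injective hA.eigenvalues := by
  intro i j hij
  by_contra hne
  have hzero := hk _ _ (hA.mulVec_eigenvectorPair k hij) (hA.eigenvectorPair_apply_self k i j)
  have hsq := hA.eigenvectorPair_dotProduct_self k hne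
  rw [hzero, zero_dotProduct] at hsq
  have hi := hA.eigenvectorBasis_apply_ne_zero hk i
  have : 0 < hA.eigenvectorBasis i k ^ 2 := by positivity
  nlinarith [sq_nonneg (hA.eigenvectorBasis j k)]

theorem eq_of_lt_eigenvalues (hA : A.IsHermitian) {k : n}
    (hk : ∀ (μ : ℝ) (v : n → ℝ), A *ᵥ v = μ • v → v k = 0 → v = 0) {c : ℝ}
    (hup : ∀ v : n → ℝ, v k = 0 → v ⬝ᵥ (A *ᵥ v) ≤ c * (v ⬝ᵥ v)) {i j : n}
    (hi : c < hA.eigenvalues i) (hj : c < hA.eigenvalues j) : i = j := by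
  by_contra hne
  have h := hup _ (hA.eigenvectorPair_apply_self k i j)
  rw [hA.eigenvectorPair_dotProduct_mulVec k hne, hA.eigenvectorPair_dotProduct_self k hne] at h
  have hik := hA.eigenvectorBasis_apply_ne_zero hk i
  have : 0 < hA.eigenvectorBasis i k ^ 2 := by positivity
  nlinarith [sq_nonneg (hA.eigenvectorBasis j k)]

end IsHermitian

theorem eq_zero_of_mulVec_eq_smul_of_apply_last_eq_zero {R : Type*} [Ring R]
    [NoZeroDivisors R] {m : ℕ} {A : Matrix (Fin (m + 1)) (Fin (m + 1)) R}
    (hzero : ∀ i j : Fin (m + 1), (j : ℕ) + 1 < i → A i j = 0)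
    (hsub : ∀ i : Fin m, A i.succ i.castSucc ≠ 0) {μ : R} {v : Fin (m + 1) → R}
    (hv : A *ᵥ v = μ • v) (hlast : v (Fin.last m) = 0) : v = 0 := by
  suffices h : ∀ i : Fin (m + 1), ∀ j, i ≤ j → v j = 0 from funext fun j => h j j le_rfl
  refine Fin.reverseInduction (fun j hj => ?_) (fun i ih j hj => ?_)
  · rwa [Fin.last_le_iff.mp hj]
  rcases hj.eq_or_lt with rfl | hlt
  · have hrow : A i.succ i.castSucc * v i.castSucc = 0 := by
      have h := congrFun hv i.succ
      rw [Pi.smul_apply, ih _ le_rfl, smul_zero, mulVec, dotProduct,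
        Finset.sum_eq_single i.castSucc] at h
      · exact h
      · intro j _ hj
        rcases lt_or_gt_of_ne hj with hj | hj
        · rw [hzero _ _ (by simpa [Fin.lt_def] using hj), zero_mul]
        · rw [ih j (Fin.castSucc_lt_iff_succ_le.mp hj), mul_zero]
      · simp
    exact (mul_eq_zero.mp hrow).resolve_left (hsub i)
  · exact ih j (Fin.castSucc_lt_iff_succ_le.mp hlt)

end Matrix

open Matrix

theorem triMat_apply_eq_zero_of_add_one_lt {N : ℕ} (J d : ℕ → ℝ) {i j : Fin N}
    (h : (j : ℕ) + 1 < i) : triMat N J d i j = 0 := by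
  simp only [triMat, of_apply]
  rw [if_neg (by omega), if_neg (by omega), if_neg (by rw [Fin.ext_iff]; omega)]

theorem triMat_succ_castSucc {m : ℕ} (J d : ℕ → ℝ) (i : Fin m) :
    triMat (m + 1) J d i.succ i.castSucc = J i := by
  simp only [triMat, of_apply, Fin.val_succ, Fin.val_castSucc]
  rw [if_neg (by omega), if_pos trivial]

theorem hPlus_eq_zero_of_mulVec_eq_smul {R : ℕ} {J : ℕ → ℝ} (hJ : ∀ k < R, J k ≠ 0) (x : ℝ)
    {μ : ℝ} {v : Fin (R + 1) → ℝ} (hv : hPlus R J x *ᵥ v = μ • v)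
    (hlast : v (Fin.last R) = 0) : v = 0 :=
  eq_zero_of_mulVec_eq_smul_of_apply_last_eq_zero
    (fun _ _ h => triMat_apply_eq_zero_of_add_one_lt _ _ h)
    (fun i => by rw [triMat_succ_castSucc]; exact hJ i i.isLt) hv hlast

section QuadraticForm

variable (n : ℕ) (J : ℕ → ℝ) (x : ℝ)

theorem hPlus_castSucc_castSucc (i j : Fin (n + 1)) :
    hPlus (n + 1) J x i.castSucc j.castSucc = triMat (n + 1) J 0 i j := by
  simp only [hPlus, triMat, of_apply, Fin.val_castSucc, Fin.castSucc_inj, Pi.zero_apply]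
  split_ifs <;> grind

theorem hPlus_castSucc_last (i : Fin (n + 1)) :
    hPlus (n + 1) J x i.castSucc (Fin.last (n + 1)) = if i = Fin.last n then J n else 0 := by
  simp only [hPlus, triMat, of_apply, Fin.val_castSucc, Fin.val_last, Fin.ext_iff]
  split_ifs <;> grind

theorem hPlus_last_castSucc (j : Fin (n + 1)) :
    hPlus (n + 1) J x (Fin.last (n + 1)) j.castSucc = if j = Fin.last n then J n else 0 := by
  simp only [hPlus, triMat, of_apply, Fin.val_castSucc, Fin.val_last, Fin.ext_iff]
  split_ifs <;> grind

theorem hPlus_last_last : hPlus (n + 1) J x (Fin.last (n + 1)) (Fin.last (n + 1)) = 1 / x := by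
  simp [hPlus, triMat]

theorem hPlus_dotProduct_mulVec (v : Fin (n + 2) → ℝ) :
    v ⬝ᵥ (hPlus (n + 1) J x *ᵥ v) =
      Fin.init v ⬝ᵥ (triMat (n + 1) J 0 *ᵥ Fin.init v) +
        2 * J n * Fin.init v (Fin.last n) * v (Fin.last (n + 1)) +
          1 / x * v (Fin.last (n + 1)) ^ 2 := by
  simp only [dotProduct, mulVec, Fin.sum_univ_castSucc (n := n + 1), hPlus_castSucc_castSucc,
    hPlus_castSucc_last, hPlus_last_castSucc, hPlus_last_last, Fin.init]
  simp only [mul_add, Finset.sum_add_distrib, ite_mul, zero_mul, mul_ite, mul_zero,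
    Finset.sum_ite_eq', Finset.mem_univ, if_true]
  ring

theorem neg_mul_le_hPlus_dotProduct_mulVec (hJ : 0 ≤ J n) (hx : 0 ≤ x) (v : Fin (n + 2) → ℝ) :
    -(‖triMat (n + 1) J 0‖ + J n) * (v ⬝ᵥ v) ≤ v ⬝ᵥ (hPlus (n + 1) J x *ᵥ v) := by
  set w := Fin.init v
  have hw := (abs_le.mp (abs_dotProduct_mulVec_le (triMat (n + 1) J 0) w)).1
  have hcorner : w (Fin.last n) ^ 2 ≤ w ⬝ᵥ w := by
    simpa only [dotProduct, sq] using
      Finset.single_le_sum (f := fun i => w i * w i) (fun i _ => mul_self_nonneg (w i))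
        (Finset.mem_univ (Fin.last n))
  have hnorm := norm_nonneg (triMat (n + 1) J 0)
  rw [hPlus_dotProduct_mulVec, dotProduct_self_eq_init]
  have hinv : 0 ≤ 1 / x := by positivity
  nlinarith [sq_nonneg (w (Fin.last n) + v (Fin.last (n + 1))), sq_nonneg (v (Fin.last (n + 1))),
    mul_nonneg hinv (sq_nonneg (v (Fin.last (n + 1))))]

theorem hPlus_dotProduct_mulVec_le_of_last_eq_zero (v : Fin (n + 2) → ℝ)
    (hv : v (Fin.last (n + 1)) = 0) :
    v ⬝ᵥ (hPlus (n + 1) J x *ᵥ v) ≤ ‖triMat (n + 1) J 0‖ * (v ⬝ᵥ v) := by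
  rw [hPlus_dotProduct_mulVec, dotProduct_self_eq_init, hv]
  have hw := (abs_le.mp (abs_dotProduct_mulVec_le (triMat (n + 1) J 0) (Fin.init v))).2
  linarith [norm_nonneg (triMat (n + 1) J 0)]

theorem single_last_dotProduct_hPlus_mulVec :
    Pi.single (Fin.last (n + 1)) 1 ⬝ᵥ (hPlus (n + 1) J x *ᵥ Pi.single (Fin.last (n + 1)) 1) =
      1 / x := by
  rw [mulVec_single_one, single_dotProduct, one_mul, col_apply, hPlus_last_last]

end QuadraticForm

/-- With positive couplings and `1/x > 2(‖h̃‖ + J_R)`, all eigenvalues of `h₊(x)` are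
simple, and exactly one eigenvalue exceeds `‖h̃‖ + J_R`, all others lying in
`[−‖h̃‖ − J_R, ‖h̃‖ + J_R]` (here `h̃ = triMat R J 0` is the top-left `R×R` block, with
`J R` the 0-indexed name of the coupling `J_R`). -/
theorem stmt19 (R : ℕ) (hR : 1 ≤ R) (J : ℕ → ℝ) (hJ : ∀ k < R, 0 < J k)
    (x : ℝ) (hx : 0 < x)
    (hxsmall : 2 * (‖triMat R J 0‖ + J (R - 1)) < 1 / x)
    (hH : (hPlus R J x).IsHermitian) :
    Function.Injective hH.eigenvalues ∧
      ∃ i : Fin (R + 1), ‖triMat R J 0‖ + J (R - 1) < hH.eigenvalues i ∧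
        ∀ j : Fin (R + 1), j ≠ i →
          hH.eigenvalues j ∈
            Set.Icc (-(‖triMat R J 0‖ + J (R - 1))) (‖triMat R J 0‖ + J (R - 1)) := by
  obtain ⟨n, rfl⟩ : ∃ n, R = n + 1 := ⟨R - 1, by omega⟩
  simp only [Nat.add_sub_cancel] at hxsmall ⊢
  have hJn : 0 < J n := hJ n n.lt_succ_self
  have hnorm := norm_nonneg (triMat (n + 1) J 0)
  have hvanish : ∀ (μ : ℝ) (v : Fin (n + 2) → ℝ),
      hPlus (n + 1) J x *ᵥ v = μ • v → v (Fin.last (n + 1)) = 0 → v = 0 :=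
    fun _ _ hv hlast => hPlus_eq_zero_of_mulVec_eq_smul (fun k hk => (hJ k hk).ne') x hv hlast
  have hup (v : Fin (n + 2) → ℝ) (hv : v (Fin.last (n + 1)) = 0) :
      v ⬝ᵥ (hPlus (n + 1) J x *ᵥ v) ≤ (‖triMat (n + 1) J 0‖ + J n) * (v ⬝ᵥ v) :=
    (hPlus_dotProduct_mulVec_le_of_last_eq_zero n J x v hv).trans <|
      mul_le_mul_of_nonneg_right (by linarith) (by simpa using dotProduct_self_star_nonneg v)
  obtain ⟨i, hi⟩ := hH.exists_lt_eigenvalues_of_mul_dotProduct_lt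
      (c := ‖triMat (n + 1) J 0‖ + J n) (Pi.single (Fin.last (n + 1)) 1) <| by
    rw [single_last_dotProduct_hPlus_mulVec, single_dotProduct, Pi.single_eq_same, mul_one]
    linarith
  refine ⟨hH.eigenvalues_injective hvanish, i, hi, fun j hj => ⟨?_, ?_⟩⟩
  · exact hH.le_eigenvalues_of_forall_mul_dotProduct_le
      (neg_mul_le_hPlus_dotProduct_mulVec n J x hJn.le hx.le) j
  · exact not_lt.mp fun hj' => hj (hH.eq_of_lt_eigenvalues hvanish hup hj' hi)
end
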